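/- arXiv:0808.3238 — 3 statements merged into one kernel-verified Lean document; each statement's English description precedes it below -/
import Mathlib

section
/- For any mm-space X and any κ > 0, ObsDiam_ℝ(X; −2κ) ≤ Sep(X; κ, κ). -/
/-!
Fix a `1`-Lipschitz `f : X → ℝ`. Lower and upper `κ`-quantiles `a`, `b` of `f_* μ` satisfy
`μ(f < a) ≤ κ ≤ μ(f ≤ a)` and `μ(f > b) ≤ κ ≤ μ(f ≥ b)`, so `[a, b]` carries `f_* μ`-mass at
least `μ(X) - 2κ`; when this is positive, `a ≤ b` and the partial diameter is at most `b - a`.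
Since `f` is `1`-Lipschitz, the sets `{f ≤ a}` and `{f ≥ b}`, each of measure at least `κ`,
are at distance at least `b - a`.
-/

open MeasureTheory Metric Set Filter Topology

/-- The distance between two subsets of a metric space. -/
noncomputable def setDist {X : Type*} [PseudoMetricSpace X] (A B : Set X) : ℝ :=
  sInf (Set.image2 dist A B)

/-- The separation distance `Sep(μ; κ₁, κ₂)`. -/
noncomputable def mmSep {X : Type*} [PseudoMetricSpace X] [MeasurableSpace X]
    (μ : Measure X) (κ₁ κ₂ : ℝ) : ℝ :=
  sSup {r | ∃ A B : Set X, MeasurableSet A ∧ MeasurableSet B ∧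
    ENNReal.ofReal κ₁ ≤ μ A ∧ ENNReal.ofReal κ₂ ≤ μ B ∧ r = setDist A B}

/-- The partial diameter `diam(ν, c)`: infimum of diameters of Borel sets of measure `≥ c`. -/
noncomputable def partDiam {Y : Type*} [PseudoMetricSpace Y] [MeasurableSpace Y]
    (ν : Measure Y) (c : ℝ) : ℝ :=
  sInf {r | ∃ A : Set Y, MeasurableSet A ∧ ENNReal.ofReal c ≤ ν A ∧ r = Metric.diam A}

/-- The observable diameter `ObsDiam_Y(X; -κ)`. -/
noncomputable def obsDiam (Y : Type*) {X : Type*} [PseudoMetricSpace X] [MeasurableSpace X]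
    [PseudoMetricSpace Y] [MeasurableSpace Y] (μ : Measure X) (κ : ℝ) : ℝ :=
  sSup {r | ∃ f : X → Y, LipschitzWith 1 f ∧
    r = partDiam (Measure.map f μ) ((μ Set.univ).toReal - κ)}

open scoped ENNReal

lemma nonempty_inter_of_measure_compl_lt {α : Type*} [MeasurableSpace α] {μ : Measure α}
    {s t : Set α} (h : μ tᶜ < μ s) : (s ∩ t).Nonempty := by
  by_contra hst
  exact h.not_ge (measure_mono fun x hx hxt => hst ⟨x, hx, hxt⟩)

section SetDist

variable {X : Type*} [PseudoMetricSpace X] {A B : Set X}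

lemma setDist_nonneg (A B : Set X) : 0 ≤ setDist A B :=
  Real.sInf_nonneg <| by rintro _ ⟨x, -, y, -, rfl⟩; exact dist_nonneg

lemma setDist_le_dist {x y : X} (hx : x ∈ A) (hy : y ∈ B) : setDist A B ≤ dist x y :=
  csInf_le ⟨0, by rintro _ ⟨x, -, y, -, rfl⟩; exact dist_nonneg⟩ ⟨x, hx, y, hy, rfl⟩

lemma le_setDist {d : ℝ} (hA : A.Nonempty) (hB : B.Nonempty)
    (h : ∀ x ∈ A, ∀ y ∈ B, d ≤ dist x y) : d ≤ setDist A B :=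
  le_csInf (hA.image2 hB) <| by rintro _ ⟨x, hx, y, hy, rfl⟩; exact h x hx y hy

lemma sub_le_setDist_preimage_Iic_Ici {f : X → ℝ} (hf : LipschitzWith 1 f) {a b : ℝ}
    (hA : (f ⁻¹' Iic a).Nonempty) (hB : (f ⁻¹' Ici b).Nonempty) :
    b - a ≤ setDist (f ⁻¹' Iic a) (f ⁻¹' Ici b) :=
  le_setDist hA hB fun x (hx : f x ≤ a) y (hy : b ≤ f y) =>
    calc b - a ≤ dist (f y) (f x) := by rw [Real.dist_eq]; linarith [le_abs_self (f y - f x)]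
      _ ≤ dist y x := by simpa using hf.dist_le_mul y x
      _ = dist x y := dist_comm y x

end SetDist

section Sep

variable {X : Type*} [PseudoMetricSpace X] [MeasurableSpace X]

lemma mmSep_nonneg (μ : Measure X) (κ₁ κ₂ : ℝ) : 0 ≤ mmSep μ κ₁ κ₂ :=
  Real.sSup_nonneg <| by rintro _ ⟨A, B, -, -, -, -, rfl⟩; exact setDist_nonneg A B

lemma exists_measure_compl_closedBall_lt [OpensMeasurableSpace X] (μ : Measure X)
    [IsFiniteMeasure μ] (x : X) {ε : ℝ≥0∞} (hε : 0 < ε) :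
    ∃ R : ℝ, μ (closedBall x R)ᶜ < ε := by
  have hempty : ⋂ n : ℕ, (closedBall x n)ᶜ = ∅ := by
    rw [← compl_iUnion, iUnion_closedBall_nat, compl_univ]
  have hlim := tendsto_measure_iInter_atTop (μ := μ) (s := fun n : ℕ => (closedBall x n)ᶜ)
    (fun n => measurableSet_closedBall.compl.nullMeasurableSet)
    (fun m n hmn => compl_subset_compl.2 (closedBall_subset_closedBall (by exact_mod_cast hmn)))
    ⟨0, measure_ne_top μ _⟩
  rw [hempty, measure_empty] at hlim
  obtain ⟨n, hn⟩ := (hlim.eventually (gt_mem_nhds hε)).exists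
  exact ⟨n, hn⟩

lemma setDist_le_mmSep [OpensMeasurableSpace X] (μ : Measure X) [IsFiniteMeasure μ]
    {κ₁ κ₂ : ℝ} (hκ₁ : 0 < κ₁) (hκ₂ : 0 < κ₂) {A B : Set X}
    (hA : MeasurableSet A) (hB : MeasurableSet B)
    (hμA : ENNReal.ofReal κ₁ ≤ μ A) (hμB : ENNReal.ofReal κ₂ ≤ μ B) :
    setDist A B ≤ mmSep μ κ₁ κ₂ := by
  have hκ₁' := ENNReal.ofReal_pos.2 hκ₁
  have hκ₂' := ENNReal.ofReal_pos.2 hκ₂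
  obtain ⟨x₀, -⟩ := nonempty_of_measure_ne_zero (hκ₁'.trans_le hμA).ne'
  obtain ⟨R, hR⟩ := exists_measure_compl_closedBall_lt μ x₀ (lt_min hκ₁' hκ₂')
  -- `mmSep` is a real `sSup`, so its set must be bounded: every admissible pair of sets
  -- meets `closedBall x₀ R`.
  refine le_csSup ⟨R + R, ?_⟩ ⟨A, B, hA, hB, hμA, hμB, rfl⟩
  rintro _ ⟨A', B', -, -, hμA', hμB', rfl⟩
  obtain ⟨x, hxA, hx⟩ :=
    nonempty_inter_of_measure_compl_lt ((hR.trans_le (min_le_left _ _)).trans_le hμA')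
  obtain ⟨y, hyB, hy⟩ :=
    nonempty_inter_of_measure_compl_lt ((hR.trans_le (min_le_right _ _)).trans_le hμB')
  calc setDist A' B' ≤ dist x y := setDist_le_dist hxA hyB
    _ ≤ dist x x₀ + dist y x₀ := dist_triangle_right x y x₀
    _ ≤ R + R := add_le_add (mem_closedBall.1 hx) (mem_closedBall.1 hy)

end Sep

section Quantile

variable {ν : Measure ℝ} {κ : ℝ≥0∞} {a : ℝ}

lemma measure_Iio_le_of_forall_lt (h : ∀ t < a, ν (Iic t) ≤ κ) : ν (Iio a) ≤ κ := by
  obtain ⟨u, hu_mono, hu_lt, hu_lim⟩ := exists_seq_strictMono_tendsto a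
  have hmono : Monotone fun n => Iio (u n) := fun m n hmn => Iio_subset_Iio (hu_mono.monotone hmn)
  rw [← (isLUB_of_tendsto_atTop hu_mono.monotone hu_lim).iUnion_Iio_eq, hmono.measure_iUnion]
  exact iSup_le fun n => (measure_mono Iio_subset_Iic_self).trans (h _ (hu_lt n))

lemma le_measure_Iic_of_forall_gt [IsFiniteMeasure ν] (h : ∀ t > a, κ ≤ ν (Iic t)) :
    κ ≤ ν (Iic a) := by
  have hinter : ⋂ t > a, Iic t = Iic a := by
    ext x
    simpa only [mem_iInter, mem_Iic] using
      ⟨le_of_forall_gt_imp_ge_of_dense, fun hx t ht => hx.trans ht.le⟩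
  have hlim := tendsto_measure_biInter_gt (μ := ν) (s := Iic) (a := a)
    (fun _ _ => measurableSet_Iic.nullMeasurableSet) (fun _ _ _ hij => Iic_subset_Iic.2 hij)
    ⟨a + 1, by linarith, measure_ne_top ν _⟩
  rw [hinter] at hlim
  exact ge_of_tendsto hlim (eventually_nhdsWithin_of_forall h)

lemma exists_measure_Iio_le_le_measure_Iic (ν : Measure ℝ) [IsFiniteMeasure ν] (hκ₀ : 0 < κ)
    (hκ : κ < ν univ) : ∃ a, ν (Iio a) ≤ κ ∧ κ ≤ ν (Iic a) := by
  set T := {t | κ ≤ ν (Iic t)}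
  obtain ⟨t₁, ht₁⟩ := ((tendsto_measure_Iic_atTop ν).eventually (lt_mem_nhds hκ)).exists
  have hempty : ⋂ t : ℝ, Iic t = ∅ :=
    eq_empty_of_forall_notMem fun x hx => by linarith [mem_Iic.1 (mem_iInter.1 hx (x - 1))]
  have hbot := tendsto_measure_iInter_atBot (μ := ν) (s := Iic)
    (fun t => measurableSet_Iic.nullMeasurableSet) (fun s t hst => Iic_subset_Iic.2 hst)
    ⟨0, measure_ne_top ν _⟩
  rw [hempty, measure_empty] at hbot
  obtain ⟨t₀, ht₀⟩ := (hbot.eventually (gt_mem_nhds hκ₀)).exists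
  have hT_bdd : BddBelow T := ⟨t₀, fun t (ht : κ ≤ ν (Iic t)) => by
    by_contra! hlt
    exact ht₀.not_ge (ht.trans (measure_mono (Iic_subset_Iic.2 hlt.le)))⟩
  refine ⟨sInf T, measure_Iio_le_of_forall_lt fun t ht => ?_,
    le_measure_Iic_of_forall_gt fun t ht => ?_⟩
  · exact (not_le.1 fun htT => (csInf_le hT_bdd htT).not_gt ht).le
  · obtain ⟨s, hsT, hst⟩ := exists_lt_of_csInf_lt ⟨t₁, ht₁.le⟩ ht
    exact hsT.trans (measure_mono (Iic_subset_Iic.2 hst.le))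

lemma exists_measure_Ioi_le_le_measure_Ici (ν : Measure ℝ) [IsFiniteMeasure ν] (hκ₀ : 0 < κ)
    (hκ : κ < ν univ) : ∃ b, ν (Ioi b) ≤ κ ∧ κ ≤ ν (Ici b) := by
  have hneg : ν.map Neg.neg univ = ν univ := by
    rw [Measure.map_apply measurable_neg MeasurableSet.univ, preimage_univ]
  obtain ⟨a, ha⟩ := exists_measure_Iio_le_le_measure_Iic (ν.map Neg.neg) hκ₀ (hneg ▸ hκ)
  refine ⟨-a, ?_⟩
  rwa [Measure.map_apply measurable_neg measurableSet_Iio,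
    Measure.map_apply measurable_neg measurableSet_Iic,
    neg_preimage, neg_preimage, neg_Iio, neg_Iic] at ha

end Quantile

lemma measure_univ_sub_le_measure_Icc (ν : Measure ℝ) (a b : ℝ) :
    ν univ - (ν (Iio a) + ν (Ioi b)) ≤ ν (Icc a b) := by
  have hcover : univ ⊆ Icc a b ∪ (Iio a ∪ Ioi b) := fun x _ => by
    rcases lt_or_ge x a with hxa | hxa
    · exact .inr (.inl hxa)
    rcases le_or_gt x b with hxb | hxb
    · exact .inl ⟨hxa, hxb⟩
    · exact .inr (.inr hxb)
  refine tsub_le_iff_left.2 ?_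
  calc ν univ ≤ ν (Icc a b ∪ (Iio a ∪ Ioi b)) := measure_mono hcover
    _ ≤ ν (Icc a b) + (ν (Iio a) + ν (Ioi b)) :=
      (measure_union_le _ _).trans (add_le_add le_rfl (measure_union_le _ _))
    _ = _ := add_comm _ _

lemma partDiam_le_diam {Y : Type*} [PseudoMetricSpace Y] [MeasurableSpace Y] {ν : Measure Y}
    {c : ℝ} {A : Set Y} (hA : MeasurableSet A) (hνA : ENNReal.ofReal c ≤ ν A) :
    partDiam ν c ≤ diam A :=
  csInf_le ⟨0, by rintro _ ⟨A, -, -, rfl⟩; exact diam_nonneg⟩ ⟨A, hA, hνA, rfl⟩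

lemma partDiam_map_le_mmSep {X : Type*} [PseudoMetricSpace X] [MeasurableSpace X]
    [OpensMeasurableSpace X] (μ : Measure X) [IsFiniteMeasure μ] {κ : ℝ} (hκ : 0 < κ)
    {f : X → ℝ} (hf : LipschitzWith 1 f) :
    partDiam (μ.map f) ((μ univ).toReal - 2 * κ) ≤ mmSep μ κ κ := by
  set ν := μ.map f
  set c := (μ univ).toReal - 2 * κ
  rcases le_or_gt c 0 with hc | hc
  · calc partDiam ν c ≤ diam (∅ : Set ℝ) :=
          partDiam_le_diam .empty (by simp [ENNReal.ofReal_eq_zero.2 hc])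
      _ = 0 := diam_empty
      _ ≤ mmSep μ κ κ := mmSep_nonneg μ κ κ
  have hfm : Measurable f := hf.continuous.measurable
  have hκ₀ : 0 < ENNReal.ofReal κ := ENNReal.ofReal_pos.2 hκ
  have hc_eq : ENNReal.ofReal c = ν univ - (ENNReal.ofReal κ + ENNReal.ofReal κ) := by
    rw [Measure.map_apply hfm .univ, preimage_univ, ← ENNReal.ofReal_add hκ.le hκ.le,
      ← ENNReal.ofReal_toReal (measure_ne_top μ univ), ← ENNReal.ofReal_sub _ (by positivity),
      ← two_mul]
  have hκ_lt : ENNReal.ofReal κ < ν univ :=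
    le_self_add.trans_lt (tsub_pos_iff_lt.1 (hc_eq ▸ ENNReal.ofReal_pos.2 hc))
  obtain ⟨a, hIio, hIic⟩ := exists_measure_Iio_le_le_measure_Iic ν hκ₀ hκ_lt
  obtain ⟨b, hIoi, hIci⟩ := exists_measure_Ioi_le_le_measure_Ici ν hκ₀ hκ_lt
  have hIcc : ENNReal.ofReal c ≤ ν (Icc a b) :=
    hc_eq ▸ (tsub_le_tsub_left (add_le_add hIio hIoi) _).trans
      (measure_univ_sub_le_measure_Icc ν a b)
  have hab : a ≤ b :=
    nonempty_Icc.1 (nonempty_of_measure_ne_zero ((ENNReal.ofReal_pos.2 hc).trans_le hIcc).ne')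
  rw [Measure.map_apply hfm measurableSet_Iic] at hIic
  rw [Measure.map_apply hfm measurableSet_Ici] at hIci
  calc partDiam ν c ≤ diam (Icc a b) := partDiam_le_diam measurableSet_Icc hIcc
    _ = b - a := Real.diam_Icc hab
    _ ≤ setDist (f ⁻¹' Iic a) (f ⁻¹' Ici b) := sub_le_setDist_preimage_Iic_Ici hf
      (nonempty_of_measure_ne_zero (hκ₀.trans_le hIic).ne')
      (nonempty_of_measure_ne_zero (hκ₀.trans_le hIci).ne')
    _ ≤ mmSep μ κ κ :=
      setDist_le_mmSep μ hκ hκ (hfm measurableSet_Iic) (hfm measurableSet_Ici) hIic hIci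

theorem obsDiam_le_sep_general
    {X : Type*} [MetricSpace X] [MeasurableSpace X] [BorelSpace X]
    (μ : Measure X) [IsFiniteMeasure μ] (κ : ℝ) (hκ : 0 < κ) :
    obsDiam ℝ μ (2 * κ) ≤ mmSep μ κ κ :=
  Real.sSup_le (by rintro _ ⟨f, hf, rfl⟩; exact partDiam_map_le_mmSep μ hκ hf)
    (mmSep_nonneg μ κ κ)

theorem obsDiam_le_sep
    {X : Type*} [MetricSpace X] [MeasurableSpace X] [BorelSpace X]
    [CompleteSpace X] [TopologicalSpace.SeparableSpace X]
    (μ : Measure X) [IsFiniteMeasure μ] (κ : ℝ) (hκ : 0 < κ) :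
    obsDiam ℝ μ (2 * κ) ≤ mmSep μ κ κ :=
  obsDiam_le_sep_general μ κ hκ
end

section
/- Let 1 ≤ p < q ≤ ∞ and ε > 0, and set k(ε) := ⌈(2/ε)^{pq/(q−p)}⌉ − 1. For any x in the monotone simplex Λ_k = {x ∈ B^k_{ℓ^p} : x₁ ≥ x₂ ≥ ⋯ ≥ x_k ≥ 0} with k ≥ k(ε)+1, the map f_{k,ε}(x) := (x₁ − x_{k(ε)+1}, …, x_{k(ε)} − x_{k(ε)+1}, 0, …, 0) satisfies d_{ℓ^q}(x, f_{k,ε}(x)) ≤ ε/2. -/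
/-!
Put `c = x_{K+1}` (index `K` from zero). By monotonicity the first `K + 1` coordinates are all at
least `c`, so `(K + 1) c^p ≤ ∑ x_i^p ≤ 1`, and the choice of `K` turns this into
`c^p ≤ (ε/2)^{pq/(q-p)}`. Every coordinate of `x - f(x)` equals `min x_i c`, so it is bounded both
by `c` and by `x_i`; interpolating, `∑ |x_i - f(x)_i|^q ≤ c^{q-p} ∑ x_i^p ≤ c^{q-p}`, i.e.
`d_{ℓ^q}(x, f(x)) ≤ c^{1-p/q}`, and `(c^{1-p/q})^{pq/(q-p)} = c^p ≤ (ε/2)^{pq/(q-p)}`.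
-/

open Finset

lemma succ_mul_rpow_le_sum_rpow_of_antitone {n : ℕ} {x : Fin n → ℝ} (hx : Antitone x)
    (hx₀ : ∀ i, 0 ≤ x i) {P : ℝ} (hP : 0 ≤ P) {k : ℕ} (hk : k < n) :
    ((k : ℝ) + 1) * x ⟨k, hk⟩ ^ P ≤ ∑ i, x i ^ P := by
  calc ((k : ℝ) + 1) * x ⟨k, hk⟩ ^ P = #(Iic (⟨k, hk⟩ : Fin n)) • x ⟨k, hk⟩ ^ P := by
        simp [Fin.card_Iic]
    _ ≤ ∑ i ∈ Iic ⟨k, hk⟩, x i ^ P :=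
        card_nsmul_le_sum _ _ _ fun i hi ↦ Real.rpow_le_rpow (hx₀ _) (hx (mem_Iic.1 hi)) hP
    _ ≤ ∑ i, x i ^ P :=
        sum_le_sum_of_subset_of_nonneg (subset_univ _) fun i _ _ ↦ Real.rpow_nonneg (hx₀ i) P

lemma rpow_le_inv_of_sum_rpow_le_one {n : ℕ} {x : Fin n → ℝ} (hx : Antitone x)
    (hx₀ : ∀ i, 0 ≤ x i) {P : ℝ} (hP : 0 ≤ P) (hsum : ∑ i, x i ^ P ≤ 1) {a : ℝ} (ha : 0 < a)
    {k : ℕ} (hka : k = ⌈a⌉₊ - 1) (hk : k < n) :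
    x ⟨k, hk⟩ ^ P ≤ a⁻¹ := by
  have hak : a ≤ k + 1 := by
    have hceil : k + 1 = ⌈a⌉₊ := by have := Nat.one_le_ceil_iff.2 ha; omega
    exact_mod_cast hceil ▸ Nat.le_ceil a
  rw [← one_div, le_div_iff₀ ha]
  have hmass := (succ_mul_rpow_le_sum_rpow_of_antitone hx hx₀ hP hk).trans hsum
  nlinarith [Real.rpow_nonneg (hx₀ ⟨k, hk⟩) P]

lemma abs_sub_truncation_eq_min {n : ℕ} {x : Fin n → ℝ} (hx : Antitone x) (hx₀ : ∀ i, 0 ≤ x i)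
    {k : ℕ} (hk : k < n) (i : Fin n) :
    |x i - if (i : ℕ) < k then x i - x ⟨k, hk⟩ else 0| = min (x i) (x ⟨k, hk⟩) := by
  split_ifs with hi
  · rw [sub_sub_cancel, abs_of_nonneg (hx₀ _), min_eq_right (hx (Fin.le_def.2 hi.le))]
  · rw [sub_zero, abs_of_nonneg (hx₀ _), min_eq_left (hx (Fin.le_def.2 (not_lt.1 hi)))]

lemma sum_abs_rpow_le_of_abs_le {ι : Type*} [Fintype ι] {z w : ι → ℝ} {c P Q : ℝ}
    (hP : 0 ≤ P) (hPQ : P ≤ Q) (hzc : ∀ i, |z i| ≤ c) (hzw : ∀ i, |z i| ≤ |w i|) :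
    ∑ i, |z i| ^ Q ≤ c ^ (Q - P) * ∑ i, |w i| ^ P := by
  rw [mul_sum]
  refine sum_le_sum fun i _ ↦ ?_
  calc |z i| ^ Q = |z i| ^ (Q - P) * |z i| ^ P := by
        rw [← Real.rpow_add_of_nonneg (abs_nonneg _) (sub_nonneg.2 hPQ) hP, sub_add_cancel]
    _ ≤ c ^ (Q - P) * |w i| ^ P :=
        mul_le_mul (Real.rpow_le_rpow (abs_nonneg _) (hzc i) (sub_nonneg.2 hPQ))
          (Real.rpow_le_rpow (abs_nonneg _) (hzw i) hP) (Real.rpow_nonneg (abs_nonneg _) _)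
          (Real.rpow_nonneg ((abs_nonneg _).trans (hzc i)) _)

lemma PiLp.dist_le_of_forall_dist_le {ι : Type*} [Fintype ι] {x y : PiLp ⊤ (fun _ : ι ↦ ℝ)} {c : ℝ}
    (hc : 0 ≤ c) (h : ∀ i, dist (x i) (y i) ≤ c) : dist x y ≤ c := by
  rw [PiLp.dist_eq_iSup]
  exact Real.iSup_le h hc

lemma PiLp.dist_le_rpow_of_abs_sub_le {ι : Type*} [Fintype ι] {q : ENNReal}
    {x y : PiLp q (fun _ : ι ↦ ℝ)} {w : ι → ℝ} {c P : ℝ} (hc : 0 ≤ c) (hP : 0 ≤ P)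
    (hPq : P < q.toReal)
    (hw : ∑ i, |w i| ^ P ≤ 1) (hc' : ∀ i, |x i - y i| ≤ c) (hw' : ∀ i, |x i - y i| ≤ |w i|) :
    dist x y ≤ c ^ (1 - P / q.toReal) := by
  have hq : 0 < q.toReal := hP.trans_lt hPq
  have hsum : ∑ i, |x i - y i| ^ q.toReal ≤ c ^ (q.toReal - P) :=
    (sum_abs_rpow_le_of_abs_le hP hPq.le hc' hw').trans
      (mul_le_of_le_one_right (Real.rpow_nonneg hc _) hw)
  calc dist x y = (∑ i, |x i - y i| ^ q.toReal) ^ (1 / q.toReal) := by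
        simp only [PiLp.dist_eq_sum hq, Real.dist_eq]
    _ ≤ (c ^ (q.toReal - P)) ^ (1 / q.toReal) := by gcongr
    _ = c ^ (1 - P / q.toReal) := by
        rw [← Real.rpow_mul hc]
        congr 1
        field_simp

lemma one_sub_toReal_div_mul_toReal_mul_div_sub {p q : ENNReal} (hp : 0 < p) (hpq : p < q)
    (hq : q ≠ ⊤) : (1 - p.toReal / q.toReal) * (p * q / (q - p)).toReal = p.toReal := by
  have hPQ : p.toReal < q.toReal := (ENNReal.toReal_lt_toReal hpq.ne_top hq).2 hpq
  have hP : 0 < p.toReal := ENNReal.toReal_pos hp.ne' hpq.ne_top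
  have : q.toReal - p.toReal ≠ 0 := (sub_pos.2 hPQ).ne'
  have : q.toReal ≠ 0 := (hP.trans hPQ).ne'
  simp only [ENNReal.toReal_div, ENNReal.toReal_mul, ENNReal.toReal_sub_of_le hpq.le hq]
  field_simp

lemma Real.rpow_le_of_rpow_mul_le {b c θ E : ℝ} (hc : 0 ≤ c) (hb : 0 ≤ b) (hE : 0 < E)
    (h : c ^ (θ * E) ≤ b ^ E) : c ^ θ ≤ b := by
  rwa [← Real.rpow_le_rpow_iff (Real.rpow_nonneg hc _) hb hE, ← Real.rpow_mul hc]

theorem dist_truncation_le_general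
    (p q : ENNReal) (hp : 1 ≤ p) (hpq : p < q)
    (ε : ℝ) (hε : 0 < ε) (K : ℕ)
    (hK : K = ⌈(2 / ε) ^ (if q = ⊤ then p.toReal else ((p * q) / (q - p)).toReal)⌉₊ - 1)
    (n : ℕ) (hn : K + 1 ≤ n)
    (x : PiLp q (fun _ : Fin n => ℝ))
    (hmono : ∀ i j : Fin n, i ≤ j → x j ≤ x i) (hpos : ∀ i, 0 ≤ x i)
    (hball : ∑ i : Fin n, |x i| ^ p.toReal ≤ 1)
    (y : PiLp q (fun _ : Fin n => ℝ))
    (hy : ∀ i : Fin n, y i = if (i : ℕ) < K then x i - x ⟨K, hn⟩ else 0) :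
    dist x y ≤ ε / 2 := by
  set E := if q = ⊤ then p.toReal else ((p * q) / (q - p)).toReal
  set c := x ⟨K, hn⟩
  have hp_top : p ≠ ⊤ := hpq.ne_top
  have hP : 0 < p.toReal := ENNReal.toReal_pos (one_pos.trans_le hp).ne' hp_top
  have hc : 0 ≤ c := hpos _
  have hxy (i : Fin n) : |x i - y i| = min (x i) c := by
    rw [hy i]; exact abs_sub_truncation_eq_min hmono hpos hn i
  have hcP : c ^ p.toReal ≤ (ε / 2) ^ E := by
    rw [← inv_div, Real.inv_rpow (by positivity)]
    exact rpow_le_inv_of_sum_rpow_le_one hmono hpos hP.le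
      (by simpa only [abs_of_nonneg (hpos _)] using hball) (by positivity) hK hn
  obtain ⟨θ, hθ₀, hθ, hdist⟩ : ∃ θ, 0 < θ ∧ θ * E = p.toReal ∧ dist x y ≤ c ^ θ := by
    rcases eq_or_ne q ⊤ with rfl | hq
    · refine ⟨1, one_pos, by simp [E], ?_⟩
      rw [Real.rpow_one]
      exact PiLp.dist_le_of_forall_dist_le hc fun i ↦ by
        rw [Real.dist_eq, hxy]; exact min_le_right _ _
    · have hPQ : p.toReal < q.toReal := (ENNReal.toReal_lt_toReal hp_top hq).2 hpq
      refine ⟨1 - p.toReal / q.toReal, sub_pos.2 ((div_lt_one (hP.trans hPQ)).2 hPQ),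
        by simpa only [E, if_neg hq] using
          one_sub_toReal_div_mul_toReal_mul_div_sub (one_pos.trans_le hp) hpq hq,
        PiLp.dist_le_rpow_of_abs_sub_le hc hP.le hPQ hball
          (fun i ↦ (hxy i).trans_le (min_le_right _ _))
          fun i ↦ (hxy i).trans_le ((min_le_left _ _).trans (le_abs_self _))⟩
  have hE : 0 < E := pos_of_mul_pos_right (hθ ▸ hP) hθ₀.le
  exact hdist.trans (Real.rpow_le_of_rpow_mul_le hc (by positivity) hE (hθ ▸ hcP))

theorem dist_truncation_le
    (p q : ENNReal) (hp : 1 ≤ p) (hpq : p < q) [Fact (1 ≤ q)]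
    (ε : ℝ) (hε : 0 < ε) (K : ℕ)
    (hK : K = ⌈(2 / ε) ^ (if q = ⊤ then p.toReal else ((p * q) / (q - p)).toReal)⌉₊ - 1)
    (n : ℕ) (hn : K + 1 ≤ n)
    (x : PiLp q (fun _ : Fin n => ℝ))
    (hmono : ∀ i j : Fin n, i ≤ j → x j ≤ x i) (hpos : ∀ i, 0 ≤ x i)
    (hball : ∑ i : Fin n, |x i| ^ p.toReal ≤ 1)
    (y : PiLp q (fun _ : Fin n => ℝ))
    (hy : ∀ i : Fin n, y i = if (i : ℕ) < K then x i - x ⟨K, hn⟩ else 0) :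
    dist x y ≤ ε / 2 :=
  dist_truncation_le_general p q hp hpq ε hε K hK n hn x hmono hpos hball y hy
end

section
/- Let 1 ≤ p < q ≤ ∞ and ε > 0 with k(ε) := ⌈(2/ε)^{pq/(q−p)}⌉ − 1. The map F : Λ_{2k(ε)+2} → ℝ^{2k(ε)+2} defined by F(x) = (x₁ − x_{k(ε)+1}, …, x_{k(ε)} − x_{k(ε)+1}, 0, …, 0) is (1 + k(ε)^{1/q})-Lipschitz with respect to the ℓ^q-distance on the monotone simplex Λ_{2k(ε)+2} = {x ∈ B^{2k(ε)+2}_{ℓ^p} : x₁ ≥ ⋯ ≥ x_{2k(ε)+2} ≥ 0}. -/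
/-!
On the coordinates below `K` the difference `F x - F y` is `(x - y)` minus the constant
`x_K - y_K`. The first part has `ℓ^q`-norm at most `‖x - y‖`, and the constant vector on `K`
coordinates has norm `K^{1/q} |x_K - y_K| ≤ K^{1/q} ‖x - y‖`; the triangle inequality concludes.
-/

open Finset WithLp

namespace PiLp

variable {ι : Type*} [Fintype ι] {p : ENNReal} [Fact (1 ≤ p)]

theorem norm_le_norm_of_forall_norm_apply_le {β : ι → Type*}
    [∀ i, SeminormedAddCommGroup (β i)] {f g : PiLp p β} (h : ∀ i, ‖f i‖ ≤ ‖g i‖) :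
    ‖f‖ ≤ ‖g‖ := by
  rcases eq_or_ne p ⊤ with rfl | hp
  · rw [norm_eq_ciSup]
    exact Real.iSup_le (fun i => (h i).trans (norm_apply_le g i)) (norm_nonneg g)
  · have hp0 : 0 < p.toReal := ENNReal.toReal_pos (zero_lt_one.trans_le Fact.out).ne' hp
    rw [norm_eq_sum hp0, norm_eq_sum hp0]
    gcongr with i
    exact h i

variable {E : Type*} [SeminormedAddCommGroup E]

/-- For `p = ∞` the factor is `#s ^ 0 = 1`; only an inequality, as the left side vanishes for
`s = ∅`. -/
theorem norm_toLp_indicator_const_le (s : Finset ι) (b : E) :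
    ‖toLp p (Set.indicator (s : Set ι) fun _ => b)‖ ≤ (#s : ℝ) ^ (1 / p.toReal) * ‖b‖ := by
  rcases eq_or_ne p ⊤ with rfl | hp
  · rw [norm_eq_ciSup]
    refine Real.iSup_le (fun i => ?_) (by positivity)
    simpa using norm_indicator_le_norm_self (fun _ => b) i
  · have hp0 : 0 < p.toReal := ENNReal.toReal_pos (zero_lt_one.trans_le Fact.out).ne' hp
    have hsum : ∑ i, ‖(Set.indicator (s : Set ι) fun _ => b) i‖ ^ p.toReal =
        #s * ‖b‖ ^ p.toReal := by
      classical
      simp [Set.indicator_apply, apply_ite, Real.zero_rpow hp0.ne']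
    rw [norm_eq_sum hp0, ofLp_toLp, hsum, Real.mul_rpow (by positivity) (by positivity),
      one_div, Real.rpow_rpow_inv (norm_nonneg b) hp0.ne']

theorem dist_toLp_indicator_sub_apply_le (s : Finset ι) (k : ι) (x y : PiLp p fun _ : ι => E) :
    dist (toLp p (Set.indicator (s : Set ι) fun i => x i - x k))
        (toLp p (Set.indicator (s : Set ι) fun i => y i - y k)) ≤
      (1 + (#s : ℝ) ^ (1 / p.toReal)) * dist x y := by
  have hsplit : toLp p (Set.indicator (s : Set ι) fun i => x i - x k) -
      toLp p (Set.indicator (s : Set ι) fun i => y i - y k) =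
      toLp p (Set.indicator (s : Set ι) fun i => x i - y i) -
        toLp p (Set.indicator (s : Set ι) fun _ => x k - y k) := by
    ext i
    by_cases hi : i ∈ s <;> simp [hi, sub_sub_sub_comm]
  rw [dist_eq_norm, hsplit, dist_eq_norm]
  calc _ ≤ ‖toLp p (Set.indicator (s : Set ι) fun i => x i - y i)‖ +
        ‖toLp p (Set.indicator (s : Set ι) fun _ => x k - y k)‖ := norm_sub_le _ _
    _ ≤ ‖x - y‖ + (#s : ℝ) ^ (1 / p.toReal) * ‖x - y‖ := by
        gcongr
        · refine norm_le_norm_of_forall_norm_apply_le fun i => ?_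
          by_cases hi : i ∈ s <;> simp [hi]
        · exact (norm_toLp_indicator_const_le s _).trans
            (by gcongr; exact norm_apply_le (x - y) k)
    _ = _ := by ring

end PiLp

theorem truncation_lipschitzOn
    (q : ENNReal) [Fact (1 ≤ q)]
    (K : ℕ)
    (x y : PiLp q (fun _ : Fin (2 * K + 2) => ℝ))
    (u v : PiLp q (fun _ : Fin (2 * K + 2) => ℝ))
    (hu : ∀ i : Fin (2 * K + 2), u i =
      if (i : ℕ) < K then x i - x ⟨K, by omega⟩ else 0)
    (hv : ∀ i : Fin (2 * K + 2), v i =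
      if (i : ℕ) < K then y i - y ⟨K, by omega⟩ else 0) :
    dist u v ≤ (1 + (K : ℝ) ^ (1 / q.toReal)) * dist x y := by
  set k : Fin (2 * K + 2) := ⟨K, by omega⟩
  have htrunc : ∀ z w : PiLp q (fun _ : Fin (2 * K + 2) => ℝ),
      (∀ i : Fin (2 * K + 2), w i = if (i : ℕ) < K then z i - z k else 0) →
      w = toLp q (Set.indicator (Iio k : Set _) fun i => z i - z k) := by
    intro z w hw
    ext i
    simp [hw i, Set.indicator, Fin.lt_def, k]
  rw [htrunc x u hu, htrunc y v hv]
  simpa [Fin.card_Iio] using PiLp.dist_toLp_indicator_sub_apply_le (Iio k) k x y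
end
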